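/- arXiv:1812.02120 — 2 statements merged into one kernel-verified Lean document; each statement's English description precedes it below -/
import Mathlib

section
/- Let G : Ω × Ω → [0,∞) satisfy G(x,y) ≤ C₀|x-y|^{2s-n} with Ω ⊂ ℝⁿ bounded, n ≥ 3, 0 < s ≤ 1, and let G be symmetric. Then for any 0 < β < 2s/n there exists C > 0 such that for every measurable A ⊂ Ω and every f ∈ L¹(Ω), ∫_A |𝒢(f)| ≤ C |A|^β ‖f‖_{L¹(Ω)}, where 𝒢(f)(x) = ∫_Ω G(x,y) f(y) dy. -/
open MeasureTheory Metric Real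

open scoped ENNReal

/-! Tonelli reduces the estimate to a bound on `∫_A |G(x, y)| dx` uniform in `y ∈ Ω`, i.e. on
`∫_A |x - y|^(2s-n) dx`. Hölder with exponents `1/β` and `1/(1-β)` bounds this by
`|A|^β (∫_A |x - y|^((2s-n)/(1-β)) dx)^(1-β)`, and `β < 2s/n` is exactly the condition
`(2s-n)/(1-β) > -n` making the last integrand locally integrable; as `Ω` is bounded, `A` lies in a
ball around `y` of radius independent of `y`. -/

theorem integral_norm_integral_mul_le {α β : Type*} [MeasurableSpace α] [MeasurableSpace β]
    {μ : Measure α} {ν : Measure β} [SFinite μ] [SFinite ν] {K : α → β → ℝ} (hK : Measurable (Function.uncurry K))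
    {f : β → ℝ} (hf : Integrable f ν) {M : ℝ≥0∞} (hM : M ≠ ∞)
    (hKM : ∀ᵐ y ∂ν, ∫⁻ x, ‖K x y‖ₑ ∂μ ≤ M) :
    ∫ x, ‖∫ y, K x y * f y ∂ν‖ ∂μ ≤ M.toReal * ∫ y, ‖f y‖ ∂ν := by
  have hKf : AEStronglyMeasurable (fun p : α × β => K p.1 p.2 * f p.2) (μ.prod ν) :=
    hK.aestronglyMeasurable.mul hf.aestronglyMeasurable.comp_snd
  rw [integral_norm_eq_lintegral_enorm hKf.integral_prod_right',
    integral_norm_eq_lintegral_enorm hf.aestronglyMeasurable, ← ENNReal.toReal_mul]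
  refine ENNReal.toReal_mono (ENNReal.mul_ne_top hM hf.2.ne) ?_
  calc ∫⁻ x, ‖∫ y, K x y * f y ∂ν‖ₑ ∂μ
      ≤ ∫⁻ x, ∫⁻ y, ‖K x y‖ₑ * ‖f y‖ₑ ∂ν ∂μ := by
        refine lintegral_mono fun x => (enorm_integral_le_lintegral_enorm _).trans_eq ?_
        simp_rw [enorm_mul]
    _ = ∫⁻ y, (∫⁻ x, ‖K x y‖ₑ ∂μ) * ‖f y‖ₑ ∂ν := by
        rw [lintegral_lintegral_swap
          (hK.enorm.aemeasurable.mul hf.aemeasurable.enorm.comp_snd)]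
        refine lintegral_congr fun y => lintegral_mul_const _ ?_
        exact (hK.comp measurable_prodMk_right).enorm
    _ ≤ ∫⁻ y, M * ‖f y‖ₑ ∂ν := lintegral_mono_ae (hKM.mono fun y hy => by gcongr)
    _ = M * ∫⁻ y, ‖f y‖ₑ ∂ν := lintegral_const_mul' _ _ hM

theorem lintegral_le_measure_univ_rpow_mul {α : Type*} [MeasurableSpace α] (μ : Measure α)
    {p q : ℝ} (hpq : p.HolderConjugate q) {g : α → ℝ≥0∞} (hg : AEMeasurable g μ) :
    ∫⁻ x, g x ∂μ ≤ μ Set.univ ^ (1 / p) * (∫⁻ x, g x ^ q ∂μ) ^ (1 / q) := by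
  simpa using ENNReal.lintegral_mul_le_Lp_mul_Lq μ hpq aemeasurable_const hg (f := 1)

section RieszPotential

variable {E : Type*} [NormedAddCommGroup E] [MeasurableSpace E] [BorelSpace E] {μ : Measure E}

theorem lintegral_ball_rpow_norm_lt_top [NormedSpace ℝ E] [FiniteDimensional ℝ E]
    [μ.IsAddHaarMeasure] (hd : 1 ≤ Module.finrank ℝ E) {ρ : ℝ}
    (hρ : -(Module.finrank ℝ E : ℝ) < ρ) (r : ℝ) :
    ∫⁻ z in ball (0 : E) r, ENNReal.ofReal (‖z‖ ^ ρ) ∂μ < ∞ := by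
  refine IntegrableOn.setLIntegral_lt_top ?_
  refine integrableOn_ball_of_norm_le_rpow hd (C := 1) (α := -ρ) (by linarith)
    (Filter.Eventually.of_forall fun z => ?_) (measurable_norm.pow_const ρ).aestronglyMeasurable
  rw [neg_neg, one_mul, norm_of_nonneg (by positivity)]

variable [μ.IsAddRightInvariant]

theorem setLIntegral_rpow_norm_sub_le_of_subset_ball {A : Set E} {y : E} {r : ℝ}
    (hA : A ⊆ ball y r) (ρ : ℝ) :
    ∫⁻ x in A, ENNReal.ofReal (‖x - y‖ ^ ρ) ∂μ ≤
      ∫⁻ z in ball (0 : E) r, ENNReal.ofReal (‖z‖ ^ ρ) ∂μ := by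
  have hball : (· - y) ⁻¹' ball (0 : E) r = ball y r := by
    ext x
    simp [dist_eq_norm]
  calc ∫⁻ x in A, ENNReal.ofReal (‖x - y‖ ^ ρ) ∂μ
      ≤ ∫⁻ x in ball y r, ENNReal.ofReal (‖x - y‖ ^ ρ) ∂μ := lintegral_mono_set hA
    _ = ∫⁻ z in ball (0 : E) r, ENNReal.ofReal (‖z‖ ^ ρ) ∂μ := by
      rw [← hball]
      exact (measurePreserving_sub_right μ y).setLIntegral_comp_preimage_emb
        (MeasurableEquiv.subRight y).measurableEmbedding (fun z => ENNReal.ofReal (‖z‖ ^ ρ)) _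

theorem setLIntegral_rpow_norm_sub_le_measure_rpow_mul {A : Set E} {y : E} {r a β : ℝ}
    (hA : A ⊆ ball y r) (hβ0 : 0 < β) (hβ1 : β < 1) :
    ∫⁻ x in A, ENNReal.ofReal (‖x - y‖ ^ a) ∂μ ≤
      μ A ^ β * (∫⁻ z in ball (0 : E) r, ENNReal.ofReal (‖z‖ ^ (a / (1 - β))) ∂μ) ^ (1 - β) := by
  have hq : 0 < 1 - β := by linarith
  have hpq : β⁻¹.HolderConjugate (1 - β)⁻¹ :=
    Real.holderConjugate_iff.2 ⟨(one_lt_inv₀ hβ0).2 hβ1, by simp⟩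
  calc ∫⁻ x in A, ENNReal.ofReal (‖x - y‖ ^ a) ∂μ
      ≤ μ A ^ β * (∫⁻ x in A, ENNReal.ofReal (‖x - y‖ ^ a) ^ (1 - β)⁻¹ ∂μ) ^ (1 - β) := by
        have := lintegral_le_measure_univ_rpow_mul (μ.restrict A) hpq
          (g := fun x => ENNReal.ofReal (‖x - y‖ ^ a)) (by fun_prop)
        simpa only [one_div, inv_inv, Measure.restrict_apply_univ] using this
    _ = μ A ^ β * (∫⁻ x in A, ENNReal.ofReal (‖x - y‖ ^ (a / (1 - β))) ∂μ) ^ (1 - β) := by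
        congr 2
        refine lintegral_congr fun x => ?_
        rw [ENNReal.ofReal_rpow_of_nonneg (by positivity) (inv_pos.2 hq).le,
          ← Real.rpow_mul (norm_nonneg _), div_eq_mul_inv]
    _ ≤ _ := by
        gcongr μ A ^ β * ?_ ^ (1 - β)
        exact setLIntegral_rpow_norm_sub_le_of_subset_ball hA _

end RieszPotential

theorem stmt3_general (n : ℕ) (hn : 3 ≤ n) (s C₀ β : ℝ) (hs1 : s ≤ 1)
    (hβ0 : 0 < β) (hβ : β < 2 * s / n)
    (Ω : Set (EuclideanSpace ℝ (Fin n))) (hΩo : IsOpen Ω)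
    (hΩb : Bornology.IsBounded Ω)
    (G : EuclideanSpace ℝ (Fin n) → EuclideanSpace ℝ (Fin n) → ℝ)
    (hGmeas : Measurable (Function.uncurry G))
    (hGpos : ∀ x y, 0 ≤ G x y)
    (hGbd : ∀ x ∈ Ω, ∀ y ∈ Ω, G x y ≤ C₀ * ‖x - y‖ ^ (2 * s - (n : ℝ))) :
    ∃ C : ℝ, 0 < C ∧ ∀ A : Set (EuclideanSpace ℝ (Fin n)), MeasurableSet A → A ⊆ Ω →
      ∀ f : EuclideanSpace ℝ (Fin n) → ℝ, IntegrableOn f Ω volume →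
        (∫ x in A, |∫ y in Ω, G x y * f y|) ≤
          C * (volume A).toReal ^ β * ∫ x in Ω, |f x| := by
  have hn3 : (3 : ℝ) ≤ n := by exact_mod_cast hn
  have hβ1 : β < 1 := hβ.trans ((div_lt_one (by linarith)).2 (by linarith))
  have hρ : -(n : ℝ) < (2 * s - n) / (1 - β) := by
    rw [lt_div_iff₀ (by linarith)]
    nlinarith [(lt_div_iff₀ (by linarith : (0 : ℝ) < n)).1 hβ]
  set r := diam Ω + 1
  have hΩr : ∀ y ∈ Ω, Ω ⊆ ball y r := fun y hy x hx =>
    mem_ball.2 ((dist_le_diam_of_mem hΩb hx hy).trans_lt (lt_add_one _))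
  set K := ∫⁻ z in ball (0 : EuclideanSpace ℝ (Fin n)) r,
    ENNReal.ofReal (‖z‖ ^ ((2 * s - n) / (1 - β)))
  have hK : K < ∞ := lintegral_ball_rpow_norm_lt_top
    (by rw [finrank_euclideanSpace_fin]; omega) (by rwa [finrank_euclideanSpace_fin]) r
  set c := ‖C₀‖ₑ * K ^ (1 - β)
  have hc : c ≠ ∞ := ENNReal.mul_ne_top enorm_ne_top
    (ENNReal.rpow_ne_top_of_nonneg (by linarith) hK.ne)
  refine ⟨c.toReal + 1, by positivity, fun A hA hAΩ f hf => ?_⟩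
  have hGA : ∀ y ∈ Ω, ∫⁻ x in A, ‖G x y‖ₑ ≤ c * volume A ^ β := fun y hy => calc
    ∫⁻ x in A, ‖G x y‖ₑ ≤ ∫⁻ x in A, ‖C₀‖ₑ * ENNReal.ofReal (‖x - y‖ ^ (2 * s - n)) := by
        refine setLIntegral_mono (by fun_prop) fun x hx => ?_
        rw [← Real.enorm_eq_ofReal (by positivity), ← enorm_mul, enorm_le_iff_norm_le,
          norm_of_nonneg (hGpos x y)]
        exact (hGbd x (hAΩ hx) y hy).trans (le_abs_self _)
    _ ≤ ‖C₀‖ₑ * (volume A ^ β * K ^ (1 - β)) := by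
        rw [lintegral_const_mul' _ _ enorm_ne_top]
        gcongr
        exact setLIntegral_rpow_norm_sub_le_measure_rpow_mul (hAΩ.trans (hΩr y hy)) hβ0 hβ1
    _ = c * volume A ^ β := by ring
  have hM : c * volume A ^ β ≠ ∞ := ENNReal.mul_ne_top hc
    (ENNReal.rpow_ne_top_of_nonneg hβ0.le ((measure_mono hAΩ).trans_lt hΩb.measure_lt_top).ne)
  calc ∫ x in A, |∫ y in Ω, G x y * f y|
      ≤ (c * volume A ^ β).toReal * ∫ y in Ω, |f y| := by
        simpa only [Real.norm_eq_abs] using integral_norm_integral_mul_le hGmeas hf hM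
          ((ae_restrict_mem hΩo.measurableSet).mono hGA)
    _ ≤ (c.toReal + 1) * (volume A).toReal ^ β * ∫ y in Ω, |f y| := by
        rw [ENNReal.toReal_mul, ← ENNReal.toReal_rpow]
        gcongr
        linarith

/-- Dunford–Pettis type estimate: for a symmetric nonnegative kernel
`G(x,y) ≤ C₀|x-y|^{2s-n}` on a bounded `Ω ⊆ ℝⁿ` and any `0 < β < 2s/n`, there is
`C > 0` with `∫_A |𝒢(f)| ≤ C |A|^β ‖f‖_{L¹}` for all measurable `A ⊆ Ω`
and `f ∈ L¹(Ω)`. -/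
theorem stmt3 (n : ℕ) (hn : 3 ≤ n) (s C₀ β : ℝ) (hs0 : 0 < s) (hs1 : s ≤ 1)
    (hβ0 : 0 < β) (hβ : β < 2 * s / n)
    (Ω : Set (EuclideanSpace ℝ (Fin n))) (hΩo : IsOpen Ω)
    (hΩb : Bornology.IsBounded Ω)
    (G : EuclideanSpace ℝ (Fin n) → EuclideanSpace ℝ (Fin n) → ℝ)
    (hGmeas : Measurable (Function.uncurry G))
    (hGpos : ∀ x y, 0 ≤ G x y)
    (hGsymm : ∀ x y, G x y = G y x)
    (hGbd : ∀ x ∈ Ω, ∀ y ∈ Ω, G x y ≤ C₀ * ‖x - y‖ ^ (2 * s - (n : ℝ))) :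
    ∃ C : ℝ, 0 < C ∧ ∀ A : Set (EuclideanSpace ℝ (Fin n)), MeasurableSet A → A ⊆ Ω →
      ∀ f : EuclideanSpace ℝ (Fin n) → ℝ, IntegrableOn f Ω volume →
        (∫ x in A, |∫ y in Ω, G x y * f y|) ≤
          C * (volume A).toReal ^ β * ∫ x in Ω, |f x| :=
  stmt3_general n hn s C₀ β hs1 hβ0 hβ Ω hΩo hΩb G hGmeas hGpos hGbd
end

section
/- Let Ω ⊂ ℝⁿ be bounded, V ∈ L^∞(Ω) with V ≥ 0, and let 𝒢 : L²(Ω) → L²(Ω) be a bounded linear operator satisfying ∫_Ω f 𝒢(f) ≥ 0 for all f ∈ L²(Ω), such that additionally 𝒢 maps L¹(Ω) into L^q(Ω) for some q > 1 continuously. Then there exists at most one u ∈ L¹(Ω) with Vu ∈ L¹(Ω) and u = 𝒢(f - Vu) for given f ∈ L¹(Ω). -/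
/-!
Put `w = u₁ - u₂` and `g = V w`. By additivity `w = -𝒢 g`, and `0 ≤ g w`, `|g| ≤ M |w|`.
Split `g` at height `t` of `|w|` into the bounded part `f = 1_{|w| ≤ t} g`, which lies in `L²`,
and the tail `r = 1_{|w| > t} g`. Positivity of `𝒢` on `f` gives `∫ f w ≤ -∫ f 𝒢 r`, and Hölder's
inequality with `𝒢 r ∈ L^q` (interpolating `f` between `L¹` and `L^∞`) yields
`Φ(t) ≤ D t^{1/q} Ψ(t)` for `Φ(t) = ∫_{|w| ≤ t} V w²` and `Ψ(t) = ∫_{|w| > t} V |w|`.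
A dyadic layer-cake estimate turns `Φ(t) = O(t^β)` into `Ψ(t) = O(t^{β-1})`, so starting from
`Ψ ≤ ‖g‖₁` every round lowers the exponent by `1 - 1/q`. Once it is negative, the nondecreasing
function `Φ` vanishes, so `V w² = 0`, hence `g = 0` and `w = -𝒢 g = 0`.
-/

open MeasureTheory Set Filter Topology
open scoped ENNReal

section

variable {α : Type*} [MeasurableSpace α]

-- For `a = ‖V w‖ₑ` and `r = ‖w‖` these are the `Φ(t)` and `Ψ(t)` above.
noncomputable def truncatedEnergy (μ : Measure α) (a : α → ℝ≥0∞) (r : α → ℝ) (t : ℝ) : ℝ≥0∞ :=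
  ∫⁻ x in {x | r x ≤ t}, a x * ENNReal.ofReal (r x) ∂μ

noncomputable def tailMass (μ : Measure α) (a : α → ℝ≥0∞) (r : α → ℝ) (t : ℝ) : ℝ≥0∞ :=
  ∫⁻ x in {x | t < r x}, a x ∂μ

def PowerBounded (F : ℝ → ℝ≥0∞) (β : ℝ) : Prop :=
  ∃ A, A ≠ ∞ ∧ ∀ t, 1 ≤ t → F t ≤ A * ENNReal.ofReal t ^ β

def IsPositiveOnL2 (𝒢 : (α → ℝ) → α → ℝ) (μ : Measure α) : Prop :=
  ∀ f, MemLp f 2 μ → 0 ≤ ∫ x, f x * 𝒢 f x ∂μ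

def IsBoundedL1Lq (𝒢 : (α → ℝ) → α → ℝ) (μ : Measure α) (q C : ℝ) : Prop :=
  ∀ f, Integrable f μ → MemLp (𝒢 f) (ENNReal.ofReal q) μ ∧
    eLpNorm (𝒢 f) (ENNReal.ofReal q) μ ≤ ENNReal.ofReal C * eLpNorm f 1 μ

variable {μ : Measure α}

lemma lintegral_mul_le_of_ae_le {a b : α → ℝ≥0∞} {K : ℝ≥0∞} (ha : AEMeasurable a μ)
    (hb : AEMeasurable b μ) (haK : ∀ᵐ x ∂μ, a x ≤ K) {p q : ℝ} (hpq : p.HolderConjugate q) :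
    ∫⁻ x, a x * b x ∂μ ≤
      K ^ (1 / q) * (∫⁻ x, a x ∂μ) ^ (1 / p) * (∫⁻ x, b x ^ q ∂μ) ^ (1 / q) := by
  have hp1 : 0 ≤ p - 1 := hpq.sub_one_pos.le
  have hinterp : ∫⁻ x, a x ^ p ∂μ ≤ K ^ (p - 1) * ∫⁻ x, a x ∂μ := by
    rw [← lintegral_const_mul'' _ ha]
    refine lintegral_mono_ae (haK.mono fun x hx => ?_)
    calc a x ^ p = a x ^ (p - 1) * a x ^ (1 : ℝ) := by
          rw [← ENNReal.rpow_add_of_nonneg _ _ hp1 zero_le_one, sub_add_cancel]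
      _ ≤ K ^ (p - 1) * a x := by rw [ENNReal.rpow_one]; gcongr
  have hexp : (p - 1) * (1 / p) = 1 / q := by
    have := hpq.one_sub_inv
    field_simp [hpq.ne_zero] at this ⊢
    linarith
  calc ∫⁻ x, a x * b x ∂μ ≤ (∫⁻ x, a x ^ p ∂μ) ^ (1 / p) * (∫⁻ x, b x ^ q ∂μ) ^ (1 / q) :=
        ENNReal.lintegral_mul_le_Lp_mul_Lq μ hpq ha hb
    _ ≤ (K ^ (p - 1) * ∫⁻ x, a x ∂μ) ^ (1 / p) * (∫⁻ x, b x ^ q ∂μ) ^ (1 / q) := by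
        gcongr; exact hpq.one_div_nonneg
    _ = K ^ (1 / q) * (∫⁻ x, a x ∂μ) ^ (1 / p) * (∫⁻ x, b x ^ q ∂μ) ^ (1 / q) := by
        rw [ENNReal.mul_rpow_of_nonneg _ _ hpq.one_div_nonneg, ← ENNReal.rpow_mul, hexp]

section LayerCake

variable {a : α → ℝ≥0∞} {r : α → ℝ}

lemma truncatedEnergy_mono : Monotone (truncatedEnergy μ a r) :=
  fun _ _ hst => lintegral_mono_set fun _ hx => le_trans hx hst

lemma tailMass_le_lintegral (t : ℝ) : tailMass μ a r t ≤ ∫⁻ x, a x ∂μ :=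
  setLIntegral_le_lintegral _ _

lemma PowerBounded.eq_zero {F : ℝ → ℝ≥0∞} {β : ℝ} (hF : PowerBounded F β) (hβ : β < 0)
    (hmono : Monotone F) (s : ℝ) : F s = 0 := by
  obtain ⟨A, hA, hbound⟩ := hF
  have hlim : Tendsto (fun t : ℝ => A * ENNReal.ofReal t ^ β) atTop (𝓝 0) := by
    have h := (ENNReal.continuous_rpow_const (y := β)).tendsto ∞
    rw [ENNReal.top_rpow_of_neg hβ] at h
    simpa using ENNReal.Tendsto.const_mul (h.comp ENNReal.tendsto_ofReal_atTop) (Or.inr hA)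
  refine nonpos_iff_eq_zero.mp (ge_of_tendsto hlim ?_)
  filter_upwards [eventually_ge_atTop (max 1 s)] with t ht
  exact (hmono (le_of_max_le_right ht)).trans (hbound t (le_of_max_le_left ht))

lemma ofReal_two_pow_mul_inv_mul_rpow {t : ℝ} (ht : 0 < t) (m : ℕ) (β : ℝ) :
    (ENNReal.ofReal (2 ^ m * t))⁻¹ * ENNReal.ofReal (2 ^ (m + 1) * t) ^ β =
      2 ^ β * ENNReal.ofReal t ^ (β - 1) * (2 ^ (β - 1)) ^ m := by
  have hT0 : ENNReal.ofReal t ≠ 0 := by simpa using ht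
  have h2 : ∀ k : ℕ, ENNReal.ofReal (2 ^ k * t) = 2 ^ k * ENNReal.ofReal t := fun k => by
    rw [ENNReal.ofReal_mul (by positivity), ENNReal.ofReal_pow zero_le_two, ENNReal.ofReal_ofNat]
  rw [h2, h2, ENNReal.mul_rpow_of_ne_top (by simp) ENNReal.ofReal_ne_top, pow_succ,
    ENNReal.mul_rpow_of_ne_top (by simp) (by simp), ← ENNReal.rpow_natCast, ← ENNReal.rpow_mul,
    mul_comm (m : ℝ), ENNReal.rpow_mul, ENNReal.rpow_natCast, ENNReal.rpow_natCast,
    ENNReal.mul_inv (by simp) (by simp), ENNReal.rpow_sub _ _ two_ne_zero (by simp),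
    ENNReal.rpow_sub _ _ hT0 ENNReal.ofReal_ne_top]
  simp only [ENNReal.rpow_one, div_eq_mul_inv, mul_pow, ENNReal.inv_pow]
  ring

lemma setLIntegral_le_inv_mul_truncatedEnergy (ha : AEMeasurable a μ) (hr : Measurable r)
    {s t : ℝ} (hs : 0 < s) :
    ∫⁻ x in {x | s ≤ r x ∧ r x < t}, a x ∂μ ≤ (ENNReal.ofReal s)⁻¹ * truncatedEnergy μ a r t := by
  set c := ENNReal.ofReal s
  have hc0 : c ≠ 0 := by simpa [c] using hs
  have hmeas : MeasurableSet {x | s ≤ r x ∧ r x < t} :=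
    (measurableSet_le measurable_const hr).inter (measurableSet_lt hr measurable_const)
  calc ∫⁻ x in {x | s ≤ r x ∧ r x < t}, a x ∂μ
      ≤ ∫⁻ x in {x | s ≤ r x ∧ r x < t}, c⁻¹ * (a x * ENNReal.ofReal (r x)) ∂μ := by
        refine setLIntegral_mono_ae' hmeas (ae_of_all _ fun x hx => ?_)
        calc a x = c⁻¹ * (a x * c) := by
              rw [mul_comm, mul_assoc, ENNReal.mul_inv_cancel hc0 ENNReal.ofReal_ne_top, mul_one]
          _ ≤ c⁻¹ * (a x * ENNReal.ofReal (r x)) := by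
              gcongr; exact ENNReal.ofReal_le_ofReal hx.1
    _ = c⁻¹ * ∫⁻ x in {x | s ≤ r x ∧ r x < t}, a x * ENNReal.ofReal (r x) ∂μ :=
        lintegral_const_mul'' _ (ha.restrict.mul hr.ennreal_ofReal.aemeasurable)
    _ ≤ c⁻¹ * truncatedEnergy μ a r t := by
        gcongr; exact lintegral_mono_set fun x hx => le_of_lt hx.2

/-- Dyadic layer cake: cover `{t < r}` by the shells `{2 ^ m t ≤ r < 2 ^ (m + 1) t}` and sum the
resulting geometric series. -/
lemma powerBounded_tailMass_sub_one (ha : AEMeasurable a μ) (hr : Measurable r) {β : ℝ}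
    (hβ : β < 1) (h : PowerBounded (truncatedEnergy μ a r) β) :
    PowerBounded (tailMass μ a r) (β - 1) := by
  obtain ⟨A, hA, hbound⟩ := h
  have hρ : (2 : ℝ≥0∞) ^ (β - 1) < 1 :=
    ENNReal.rpow_lt_one_of_one_lt_of_neg (by norm_num) (by linarith)
  refine ⟨A * 2 ^ β * (1 - 2 ^ (β - 1))⁻¹, ?_, fun t ht => ?_⟩
  · exact ENNReal.mul_ne_top (ENNReal.mul_ne_top hA (by simp [ENNReal.rpow_eq_top_iff]))
      (ENNReal.inv_ne_top.mpr (tsub_pos_iff_lt.mpr hρ).ne')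
  have ht0 : 0 < t := one_pos.trans_le ht
  set shell : ℕ → Set α := fun m => {x | 2 ^ m * t ≤ r x ∧ r x < 2 ^ (m + 1) * t}
  have hcover : {x | t < r x} ⊆ ⋃ m, shell m := fun x hx => by
    obtain ⟨m, h1, h2⟩ := exists_nat_pow_near ((one_le_div ht0).mpr (le_of_lt hx)) one_lt_two
    exact mem_iUnion.mpr ⟨m, (le_div_iff₀ ht0).mp h1, (div_lt_iff₀ ht0).mp h2⟩
  have hshell : ∀ m, ∫⁻ x in shell m, a x ∂μ ≤
      A * 2 ^ β * ENNReal.ofReal t ^ (β - 1) * (2 ^ (β - 1)) ^ m := fun m =>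
    calc ∫⁻ x in shell m, a x ∂μ
        ≤ (ENNReal.ofReal (2 ^ m * t))⁻¹ * truncatedEnergy μ a r (2 ^ (m + 1) * t) :=
          setLIntegral_le_inv_mul_truncatedEnergy ha hr (by positivity)
      _ ≤ (ENNReal.ofReal (2 ^ m * t))⁻¹ * (A * ENNReal.ofReal (2 ^ (m + 1) * t) ^ β) := by
          gcongr; exact hbound _ (one_le_mul_of_one_le_of_one_le (one_le_pow₀ one_le_two) ht)
      _ = A * 2 ^ β * ENNReal.ofReal t ^ (β - 1) * (2 ^ (β - 1)) ^ m := by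
          rw [mul_left_comm, ofReal_two_pow_mul_inv_mul_rpow ht0]; ring
  calc tailMass μ a r t ≤ ∫⁻ x in ⋃ m, shell m, a x ∂μ := lintegral_mono_set hcover
    _ ≤ ∑' m, ∫⁻ x in shell m, a x ∂μ := lintegral_iUnion_le _ _
    _ ≤ ∑' m, A * 2 ^ β * ENNReal.ofReal t ^ (β - 1) * (2 ^ (β - 1)) ^ m :=
        ENNReal.tsum_le_tsum hshell
    _ = A * 2 ^ β * (1 - 2 ^ (β - 1))⁻¹ * ENNReal.ofReal t ^ (β - 1) := by
        rw [ENNReal.tsum_mul_left, ENNReal.tsum_geometric]; ring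

lemma ae_mul_ofReal_eq_zero_of_truncatedEnergy_eq_zero (ha : AEMeasurable a μ)
    (hr : Measurable r) (h : ∀ t, truncatedEnergy μ a r t = 0) :
    ∀ᵐ x ∂μ, a x * ENNReal.ofReal (r x) = 0 := by
  have hcover : (⋃ n : ℕ, {x | r x ≤ n}) = univ :=
    iUnion_eq_univ_iff.mpr fun x => exists_nat_ge (r x)
  rw [← Measure.restrict_univ (μ := μ), ← hcover, ae_restrict_iUnion_iff]
  exact fun n => (lintegral_eq_zero_iff' (ha.restrict.mul hr.ennreal_ofReal.aemeasurable)).mp (h n)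

lemma ae_mul_ofReal_eq_zero_of_truncatedEnergy_le (ha : AEMeasurable a μ) (hr : Measurable r)
    (ha_fin : ∫⁻ x, a x ∂μ ≠ ∞) {p : ℝ} (hp : p < 1) {D : ℝ≥0∞} (hD : D ≠ ∞)
    (hkey : ∀ t, 1 ≤ t → truncatedEnergy μ a r t ≤ D * ENNReal.ofReal t ^ p * tailMass μ a r t) :
    ∀ᵐ x ∂μ, a x * ENNReal.ofReal (r x) = 0 := by
  have hstep : ∀ β < 1, PowerBounded (truncatedEnergy μ a r) β →
      PowerBounded (truncatedEnergy μ a r) (β - (1 - p)) := fun β hβ h => by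
    obtain ⟨A, hA, hbound⟩ := powerBounded_tailMass_sub_one ha hr hβ h
    refine ⟨D * A, ENNReal.mul_ne_top hD hA, fun t ht => ?_⟩
    have hT0 : ENNReal.ofReal t ≠ 0 := by simpa using one_pos.trans_le ht
    calc truncatedEnergy μ a r t
        ≤ D * ENNReal.ofReal t ^ p * (A * ENNReal.ofReal t ^ (β - 1)) :=
          (hkey t ht).trans (by gcongr; exact hbound t ht)
      _ = D * A * ENNReal.ofReal t ^ (β - (1 - p)) := by
          rw [show β - (1 - p) = p + (β - 1) by ring,
            ENNReal.rpow_add _ _ hT0 ENNReal.ofReal_ne_top]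
          ring
  have hiterate : ∀ m : ℕ, PowerBounded (truncatedEnergy μ a r) (p - m * (1 - p)) := by
    intro m
    induction m with
    | zero =>
      refine ⟨D * ∫⁻ x, a x ∂μ, ENNReal.mul_ne_top hD ha_fin, fun t ht => ?_⟩
      calc truncatedEnergy μ a r t ≤ D * ENNReal.ofReal t ^ p * ∫⁻ x, a x ∂μ :=
            (hkey t ht).trans (by gcongr; exact tailMass_le_lintegral t)
        _ = _ := by simp; ring
    | succ m ih =>
      convert hstep _ (by nlinarith [(Nat.cast_nonneg m : (0 : ℝ) ≤ m)]) ih using 1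
      push_cast; ring
  obtain ⟨m, hm⟩ := exists_nat_gt (p / (1 - p))
  have hneg : p - m * (1 - p) < 0 := by
    rw [div_lt_iff₀ (by linarith)] at hm; linarith
  exact ae_mul_ofReal_eq_zero_of_truncatedEnergy_eq_zero ha hr
    ((hiterate m).eq_zero hneg truncatedEnergy_mono)

end LayerCake

section Truncation

variable {g w : α → ℝ} {t : ℝ}

lemma norm_indicator_le_mul {M : ℝ} (hM : 0 ≤ M) (ht : 0 ≤ t)
    (hgM : ∀ᵐ x ∂μ, |g x| ≤ M * |w x|) :
    ∀ᵐ x ∂μ, ‖{x | ‖w x‖ ≤ t}.indicator g x‖ ≤ M * t := by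
  filter_upwards [hgM] with x hx
  by_cases hxS : x ∈ {x | ‖w x‖ ≤ t}
  · rw [indicator_of_mem hxS, Real.norm_eq_abs]
    exact hx.trans (mul_le_mul_of_nonneg_left hxS hM)
  · rw [indicator_of_notMem hxS, norm_zero]
    exact mul_nonneg hM ht

lemma integrable_indicator_mul (hg : Integrable g μ) (hw : Measurable w) (ht : 0 ≤ t) :
    Integrable (fun x => {x | ‖w x‖ ≤ t}.indicator g x * w x) μ := by
  have hS : MeasurableSet {x | ‖w x‖ ≤ t} := measurableSet_le hw.norm measurable_const
  refine (hg.bdd_mul (hw.indicator hS).aestronglyMeasurable (c := t)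
    (ae_of_all _ fun x => ?_)).congr (ae_of_all _ fun x => ?_)
  · by_cases hxS : x ∈ {x | ‖w x‖ ≤ t}
    · rw [indicator_of_mem hxS]; exact hxS
    · rw [indicator_of_notMem hxS, norm_zero]; exact ht
  · by_cases hxS : x ∈ {x | ‖w x‖ ≤ t}
    · simp only [indicator_of_mem hxS, mul_comm]
    · simp only [indicator_of_notMem hxS, zero_mul]

lemma truncatedEnergy_eq_ofReal_integral (hg : Integrable g μ) (hw : Measurable w)
    (hgw : ∀ᵐ x ∂μ, 0 ≤ g x * w x) (ht : 0 ≤ t) :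
    truncatedEnergy μ (‖g ·‖ₑ) (‖w ·‖) t =
      ENNReal.ofReal (∫ x, {x | ‖w x‖ ≤ t}.indicator g x * w x ∂μ) := by
  have hS : MeasurableSet {x | ‖w x‖ ≤ t} := measurableSet_le hw.norm measurable_const
  have hnonneg : 0 ≤ᵐ[μ] fun x => {x | ‖w x‖ ≤ t}.indicator g x * w x := hgw.mono fun x hx => by
    by_cases hxS : x ∈ {x | ‖w x‖ ≤ t}
    · simp only [Pi.zero_apply, indicator_of_mem hxS, hx]
    · simp only [Pi.zero_apply, indicator_of_notMem hxS, zero_mul, le_refl]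
  rw [truncatedEnergy, ← lintegral_indicator hS,
    ofReal_integral_eq_lintegral_ofReal (integrable_indicator_mul hg hw ht) hnonneg]
  refine lintegral_congr_ae (hgw.mono fun x hx => ?_)
  by_cases hxS : x ∈ {x | ‖w x‖ ≤ t}
  · simp only [indicator_of_mem hxS]
    rw [← Real.norm_of_nonneg hx, norm_mul, ENNReal.ofReal_mul (norm_nonneg _), ofReal_norm,
      ofReal_norm]
  · simp only [indicator_of_notMem hxS, zero_mul, ENNReal.ofReal_zero]

lemma eLpNorm_indicator_compl_eq_tailMass (hw : Measurable w) :
    eLpNorm ({x | ‖w x‖ ≤ t}ᶜ.indicator g) 1 μ = tailMass μ (‖g ·‖ₑ) (‖w ·‖) t := by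
  have hSc : {x | ‖w x‖ ≤ t}ᶜ = {x | t < ‖w x‖} := by ext; simp
  rw [eLpNorm_one_eq_lintegral_enorm, tailMass, ← hSc,
    ← lintegral_indicator (measurableSet_le hw.norm measurable_const).compl]
  simp only [enorm_indicator_eq_indicator_enorm]

lemma lintegral_enorm_indicator_mul_le {q M : ℝ} (hq : 1 < q) (hM : 0 ≤ M) (ht : 0 ≤ t)
    (hg : AEStronglyMeasurable g μ) (hw : Measurable w) (hgM : ∀ᵐ x ∂μ, |g x| ≤ M * |w x|)
    {h : α → ℝ} (hh : AEStronglyMeasurable h μ) :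
    ∫⁻ x, ‖{x | ‖w x‖ ≤ t}.indicator g x * h x‖ₑ ∂μ ≤
      ENNReal.ofReal M ^ (1 / q) * (∫⁻ x, ‖g x‖ₑ ∂μ) ^ (1 / q.conjExponent) *
        ENNReal.ofReal t ^ (1 / q) * eLpNorm h (ENNReal.ofReal q) μ := by
  have hpq := (Real.HolderConjugate.conjExponent hq).symm
  have hq0 : 0 < q := one_pos.trans hq
  have hS : MeasurableSet {x | ‖w x‖ ≤ t} := measurableSet_le hw.norm measurable_const
  have hbound : ∀ᵐ x ∂μ, ‖{x | ‖w x‖ ≤ t}.indicator g x‖ₑ ≤ ENNReal.ofReal (M * t) :=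
    (norm_indicator_le_mul hM ht hgM).mono fun x hx => by
      rw [← ofReal_norm]; exact ENNReal.ofReal_le_ofReal hx
  simp_rw [enorm_mul]
  calc ∫⁻ x, ‖{x | ‖w x‖ ≤ t}.indicator g x‖ₑ * ‖h x‖ₑ ∂μ
      ≤ ENNReal.ofReal (M * t) ^ (1 / q) *
          (∫⁻ x, ‖{x | ‖w x‖ ≤ t}.indicator g x‖ₑ ∂μ) ^ (1 / q.conjExponent) *
          (∫⁻ x, ‖h x‖ₑ ^ q ∂μ) ^ (1 / q) :=
        lintegral_mul_le_of_ae_le (hg.indicator hS).enorm hh.enorm hbound hpq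
    _ ≤ ENNReal.ofReal (M * t) ^ (1 / q) * (∫⁻ x, ‖g x‖ₑ ∂μ) ^ (1 / q.conjExponent) *
          eLpNorm h (ENNReal.ofReal q) μ := by
        gcongr
        · exact hpq.one_div_nonneg
        · exact enorm_indicator_le_enorm_self _ _
        · rw [eLpNorm_eq_lintegral_rpow_enorm_toReal (by simpa using hq0) ENNReal.ofReal_ne_top,
            ENNReal.toReal_ofReal hq0.le]
    _ = _ := by
        rw [ENNReal.ofReal_mul hM, ENNReal.mul_rpow_of_nonneg _ _ (by positivity)]
        ring

end Truncation

section Operator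

lemma IsBoundedL1Lq.ae_eq_zero {𝒢 : (α → ℝ) → α → ℝ} {q C : ℝ} (h𝒢 : IsBoundedL1Lq 𝒢 μ q C)
    (hq : 0 < q) {f : α → ℝ} (hf : Integrable f μ) (hf0 : f =ᵐ[μ] 0) : 𝒢 f =ᵐ[μ] 0 := by
  obtain ⟨hmem, hbound⟩ := h𝒢 f hf
  rw [eLpNorm_congr_ae hf0, eLpNorm_zero, mul_zero, nonpos_iff_eq_zero] at hbound
  exact (eLpNorm_eq_zero_iff hmem.aestronglyMeasurable (by simpa using hq)).mp hbound

variable {𝒢 : (α → ℝ) →+ (α → ℝ)}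

lemma IsPositiveOnL2.integral_mul_le (h𝒢 : IsPositiveOnL2 𝒢 μ)
    {f r w : α → ℝ} (hf : MemLp f 2 μ) (hw : w =ᵐ[μ] -𝒢 (f + r))
    (hfw : Integrable (fun x => f x * w x) μ) (hfr : Integrable (fun x => f x * 𝒢 r x) μ) :
    ∫ x, f x * w x ∂μ ≤ -∫ x, f x * 𝒢 r x ∂μ := by
  have hsplit : (fun x => f x * 𝒢 f x) =ᵐ[μ] fun x => -(f x * w x + f x * 𝒢 r x) := by
    filter_upwards [hw] with x hx
    rw [hx, map_add]
    simp only [Pi.neg_apply, Pi.add_apply]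
    ring
  have hpos := h𝒢 f hf
  rw [integral_congr_ae hsplit, integral_neg, integral_add hfw hfr] at hpos
  linarith

variable {q C M : ℝ} {g w : α → ℝ}

lemma truncatedEnergy_le (hpos : IsPositiveOnL2 𝒢 μ) (hreg : IsBoundedL1Lq 𝒢 μ q C) (hq : 1 < q)
    (hM : 0 ≤ M) (hg : Integrable g μ) (hw : Measurable w) (hw𝒢 : w =ᵐ[μ] -𝒢 g)
    (hgw : ∀ᵐ x ∂μ, 0 ≤ g x * w x) (hgM : ∀ᵐ x ∂μ, |g x| ≤ M * |w x|) {t : ℝ} (ht : 0 ≤ t) :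
    truncatedEnergy μ (‖g ·‖ₑ) (‖w ·‖) t ≤
      ENNReal.ofReal M ^ (1 / q) * (∫⁻ x, ‖g x‖ₑ ∂μ) ^ (1 / q.conjExponent) *
        ENNReal.ofReal C * ENNReal.ofReal t ^ (1 / q) * tailMass μ (‖g ·‖ₑ) (‖w ·‖) t := by
  set S := {x | ‖w x‖ ≤ t}
  have hS : MeasurableSet S := measurableSet_le hw.norm measurable_const
  set f := S.indicator g
  set r := Sᶜ.indicator g
  have hf : Integrable f μ := hg.indicator hS
  have hf_L2 : MemLp f 2 μ := (memLp_two_iff_integrable_sq hf.1).mpr <| by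
    simpa [sq] using hf.bdd_mul hf.1 (norm_indicator_le_mul hM ht hgM)
  obtain ⟨h𝒢r, h𝒢r_bound⟩ := hreg r (hg.indicator hS.compl)
  have holder := lintegral_enorm_indicator_mul_le hq hM ht hg.1 hw hgM h𝒢r.1
  have hf𝒢r : Integrable (fun x => f x * 𝒢 r x) μ := by
    have hpq := (Real.HolderConjugate.conjExponent hq).symm
    refine ⟨hf.1.mul h𝒢r.1, holder.trans_lt (ENNReal.mul_lt_top ?_ h𝒢r.2)⟩
    refine (ENNReal.mul_ne_top (ENNReal.mul_ne_top ?_ ?_) ?_).lt_top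
    · exact ENNReal.rpow_ne_top_of_nonneg (by positivity) ENNReal.ofReal_ne_top
    · exact ENNReal.rpow_ne_top_of_nonneg hpq.one_div_nonneg hg.2.ne
    · exact ENNReal.rpow_ne_top_of_nonneg (by positivity) ENNReal.ofReal_ne_top
  have hkey := hpos.integral_mul_le hf_L2 (by rwa [indicator_self_add_compl])
    (integrable_indicator_mul hg hw ht) hf𝒢r
  calc truncatedEnergy μ (‖g ·‖ₑ) (‖w ·‖) t = ENNReal.ofReal (∫ x, f x * w x ∂μ) :=
        truncatedEnergy_eq_ofReal_integral hg hw hgw ht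
    _ ≤ ENNReal.ofReal (-∫ x, f x * 𝒢 r x ∂μ) := ENNReal.ofReal_le_ofReal hkey
    _ ≤ ‖∫ x, f x * 𝒢 r x ∂μ‖ₑ := by
        rw [← ofReal_norm]; exact ENNReal.ofReal_le_ofReal (neg_le_abs _)
    _ ≤ ∫⁻ x, ‖f x * 𝒢 r x‖ₑ ∂μ := enorm_integral_le_lintegral_enorm _
    _ ≤ ENNReal.ofReal M ^ (1 / q) * (∫⁻ x, ‖g x‖ₑ ∂μ) ^ (1 / q.conjExponent) *
          ENNReal.ofReal t ^ (1 / q) * (ENNReal.ofReal C * eLpNorm r 1 μ) :=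
        holder.trans (by gcongr)
    _ = _ := by rw [eLpNorm_indicator_compl_eq_tailMass hw]; ring

lemma ae_eq_zero_of_eq_neg_apply_of_measurable (hpos : IsPositiveOnL2 𝒢 μ)
    (hreg : IsBoundedL1Lq 𝒢 μ q C) (hq : 1 < q) (hM : 0 ≤ M) (hg : Integrable g μ)
    (hw : Measurable w) (hw𝒢 : w =ᵐ[μ] -𝒢 g) (hgw : ∀ᵐ x ∂μ, 0 ≤ g x * w x)
    (hgM : ∀ᵐ x ∂μ, |g x| ≤ M * |w x|) : w =ᵐ[μ] 0 := by
  have hpq := (Real.HolderConjugate.conjExponent hq).symm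
  have hD : ENNReal.ofReal M ^ (1 / q) * (∫⁻ x, ‖g x‖ₑ ∂μ) ^ (1 / q.conjExponent) *
      ENNReal.ofReal C ≠ ∞ :=
    ENNReal.mul_ne_top (ENNReal.mul_ne_top
      (ENNReal.rpow_ne_top_of_nonneg (by positivity) ENNReal.ofReal_ne_top)
      (ENNReal.rpow_ne_top_of_nonneg hpq.one_div_nonneg hg.2.ne)) ENNReal.ofReal_ne_top
  have hgw0 : ∀ᵐ x ∂μ, ‖g x‖ₑ * ENNReal.ofReal ‖w x‖ = 0 :=
    ae_mul_ofReal_eq_zero_of_truncatedEnergy_le hg.1.enorm hw.norm hg.2.ne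
      (by rw [div_lt_one (one_pos.trans hq)]; exact hq) hD
      fun t ht => truncatedEnergy_le hpos hreg hq hM hg hw hw𝒢 hgw hgM (zero_le_one.trans ht)
  have hg0 : g =ᵐ[μ] 0 := by
    filter_upwards [hgw0, hgM] with x h0 hx
    rcases mul_eq_zero.mp h0 with h | h
    · simpa using h
    · have : w x = 0 := by simpa using h
      simpa [this] using hx
  filter_upwards [hw𝒢, hreg.ae_eq_zero (one_pos.trans hq) hg hg0] with x h1 h2
  simp [h1, h2]

theorem ae_eq_zero_of_eq_neg_apply (hpos : IsPositiveOnL2 𝒢 μ) (hreg : IsBoundedL1Lq 𝒢 μ q C)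
    (hq : 1 < q) (hM : 0 ≤ M) (hg : Integrable g μ) (hw𝒢 : w =ᵐ[μ] -𝒢 g)
    (hgw : ∀ᵐ x ∂μ, 0 ≤ g x * w x) (hgM : ∀ᵐ x ∂μ, |g x| ≤ M * |w x|) : w =ᵐ[μ] 0 := by
  have hw : AEMeasurable w μ :=
    ((hreg g hg).1.aestronglyMeasurable.neg.congr hw𝒢.symm).aemeasurable
  have hmk := hw.ae_eq_mk
  refine hmk.trans (ae_eq_zero_of_eq_neg_apply_of_measurable hpos hreg hq hM hg
    hw.measurable_mk (hmk.symm.trans hw𝒢) ?_ ?_)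
  · filter_upwards [hgw, hmk] with x hx hwx
    rwa [← hwx]
  · filter_upwards [hgM, hmk] with x hx hwx
    rwa [← hwx]

end Operator

end

theorem stmt13_general (n : ℕ) (Ω : Set (EuclideanSpace ℝ (Fin n)))
    (𝒢 : (EuclideanSpace ℝ (Fin n) → ℝ) → (EuclideanSpace ℝ (Fin n) → ℝ))
    (hadd : ∀ f g, 𝒢 (f + g) = 𝒢 f + 𝒢 g)
    (hcoerc : ∀ f, MemLp f 2 (volume.restrict Ω) →
      0 ≤ ∫ x, f x * 𝒢 f x ∂(volume.restrict Ω))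
    (hreg : ∃ q : ℝ, 1 < q ∧ ∃ C : ℝ, 0 < C ∧ ∀ f,
      Integrable f (volume.restrict Ω) →
        MemLp (𝒢 f) (ENNReal.ofReal q) (volume.restrict Ω) ∧
        eLpNorm (𝒢 f) (ENNReal.ofReal q) (volume.restrict Ω) ≤
          ENNReal.ofReal C * eLpNorm f 1 (volume.restrict Ω))
    (V : EuclideanSpace ℝ (Fin n) → ℝ)
    (hV0 : ∀ x, 0 ≤ V x) (hVbd : ∃ M : ℝ, ∀ x, V x ≤ M)
    (f : EuclideanSpace ℝ (Fin n) → ℝ) :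
    ∀ u₁ u₂ : EuclideanSpace ℝ (Fin n) → ℝ,
      Integrable u₁ (volume.restrict Ω) →
      Integrable (fun x => V x * u₁ x) (volume.restrict Ω) →
      u₁ =ᵐ[volume.restrict Ω] 𝒢 (fun x => f x - V x * u₁ x) →
      Integrable u₂ (volume.restrict Ω) →
      Integrable (fun x => V x * u₂ x) (volume.restrict Ω) →
      u₂ =ᵐ[volume.restrict Ω] 𝒢 (fun x => f x - V x * u₂ x) →
      u₁ =ᵐ[volume.restrict Ω] u₂ := by
  intro u₁ u₂ _ hVu₁ hu₁ _ hVu₂ hu₂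
  obtain ⟨q, hq, C, -, h𝒢⟩ := hreg
  obtain ⟨M, hM⟩ := hVbd
  let 𝒢' := AddMonoidHom.mk' 𝒢 hadd
  have hdiff : (fun x => f x - V x * u₁ x) =
      (fun x => f x - V x * u₂ x) - fun x => V x * (u₁ x - u₂ x) := by
    funext x; simp only [Pi.sub_apply]; ring
  have hw : (u₁ - u₂) =ᵐ[volume.restrict Ω] -𝒢' fun x => V x * (u₁ x - u₂ x) := by
    filter_upwards [hu₁, hu₂] with x h₁ h₂
    rw [Pi.sub_apply, h₁, h₂, hdiff, ← AddMonoidHom.mk'_apply 𝒢 hadd, map_sub]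
    simp only [Pi.sub_apply, Pi.neg_apply, sub_sub_cancel_left]
    rfl
  have hzero := ae_eq_zero_of_eq_neg_apply (𝒢 := 𝒢') hcoerc h𝒢 hq ((hV0 0).trans (hM 0))
    ((hVu₁.sub hVu₂).congr (ae_of_all _ fun x => by simp only [Pi.sub_apply]; ring)) hw
    (ae_of_all _ fun x => by
      rw [Pi.sub_apply, mul_assoc]; exact mul_nonneg (hV0 x) (mul_self_nonneg _))
    (ae_of_all _ fun x => by
      rw [abs_mul, abs_of_nonneg (hV0 x), Pi.sub_apply]
      exact mul_le_mul_of_nonneg_right (hM x) (abs_nonneg _))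
  filter_upwards [hzero] with x hx
  exact sub_eq_zero.mp hx

/-- Uniqueness for bounded potential: if the linear operator `𝒢` has a nonnegative
quadratic form (`∫ f 𝒢(f) ≥ 0` on `L²`) and maps `L¹(Ω)` continuously into `L^q(Ω)`
for some `q > 1`, and `0 ≤ V ∈ L^∞(Ω)`, then for any `f ∈ L¹(Ω)` there is at most one
`u ∈ L¹(Ω)` with `Vu ∈ L¹(Ω)` and `u = 𝒢(f - Vu)`. -/
theorem stmt13 (n : ℕ) (Ω : Set (EuclideanSpace ℝ (Fin n))) (hΩo : IsOpen Ω)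
    (hΩb : Bornology.IsBounded Ω)
    (𝒢 : (EuclideanSpace ℝ (Fin n) → ℝ) → (EuclideanSpace ℝ (Fin n) → ℝ))
    (hadd : ∀ f g, 𝒢 (f + g) = 𝒢 f + 𝒢 g)
    (hsmul : ∀ (c : ℝ) f, 𝒢 (c • f) = c • 𝒢 f)
    (hcoerc : ∀ f, MemLp f 2 (volume.restrict Ω) →
      0 ≤ ∫ x, f x * 𝒢 f x ∂(volume.restrict Ω))
    (hreg : ∃ q : ℝ, 1 < q ∧ ∃ C : ℝ, 0 < C ∧ ∀ f,
      Integrable f (volume.restrict Ω) →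
        MemLp (𝒢 f) (ENNReal.ofReal q) (volume.restrict Ω) ∧
        eLpNorm (𝒢 f) (ENNReal.ofReal q) (volume.restrict Ω) ≤
          ENNReal.ofReal C * eLpNorm f 1 (volume.restrict Ω))
    (V : EuclideanSpace ℝ (Fin n) → ℝ) (hVmeas : Measurable V)
    (hV0 : ∀ x, 0 ≤ V x) (hVbd : ∃ M : ℝ, ∀ x, V x ≤ M)
    (f : EuclideanSpace ℝ (Fin n) → ℝ) (hf : Integrable f (volume.restrict Ω)) :
    ∀ u₁ u₂ : EuclideanSpace ℝ (Fin n) → ℝ,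
      Integrable u₁ (volume.restrict Ω) →
      Integrable (fun x => V x * u₁ x) (volume.restrict Ω) →
      u₁ =ᵐ[volume.restrict Ω] 𝒢 (fun x => f x - V x * u₁ x) →
      Integrable u₂ (volume.restrict Ω) →
      Integrable (fun x => V x * u₂ x) (volume.restrict Ω) →
      u₂ =ᵐ[volume.restrict Ω] 𝒢 (fun x => f x - V x * u₂ x) →
      u₁ =ᵐ[volume.restrict Ω] u₂ :=
  stmt13_general n Ω 𝒢 hadd hcoerc hreg V hV0 hVbd f
end
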